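/- arXiv:2203.16409 — 3 statements merged into one kernel-verified Lean document; each statement's English description precedes it below -/
import Mathlib

section
/- If every vertex of a perturbed polygon P with vertices b_0,...,b_{n-1} satisfies |b_i - a_i*| ≤ (1/4) sin²(π/n), where a_i* are the vertices of the regular n-gon inscribed in the unit circle, then every interior angle of P is at most ((n-2)π/n) + 2 arcsin((1/4) sin(π/n)), which is strictly less than π; in particular P is convex. -/
/-!
The regular `n`-gon has interior angles `π - 2π/n` and sides of length `2 sin (π/n)`. Moving every
vertex by at most `ε` moves each edge vector at a vertex by at most `2ε`, and a vector within `d` of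
`u`, with `d < ‖u‖`, makes an angle of at most `arcsin (d / ‖u‖)` with `u`. By the triangle
inequality for angles, each perturbed interior angle exceeds the regular one by at most
`2 arcsin (2ε / (2 sin (π/n))) = 2 arcsin (sin (π/n) / 4)`, which is less than `2π/n`.
-/

open Real InnerProductGeometry
open scoped EuclideanGeometry RealInnerProductSpace

section Perturbation

variable {V : Type*} [NormedAddCommGroup V] [InnerProductSpace ℝ V]

/-- `sin (angle u v) * ‖u‖` is the distance from `u` to the line spanned by `v`. -/
theorem sin_angle_mul_norm_le_dist (u v : V) : sin (angle u v) * ‖u‖ ≤ dist u v := by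
  rcases eq_or_ne v 0 with rfl | hv
  · simp
  have hv' : 0 < ‖v‖ := norm_pos_iff.2 hv
  refine le_of_mul_le_mul_right ?_ hv'
  rw [mul_assoc, sin_angle_mul_norm_mul_norm, sqrt_le_left (by positivity), dist_eq_norm,
    mul_pow, norm_sub_sq_real, real_inner_self_eq_norm_sq, real_inner_self_eq_norm_sq]
  nlinarith [sq_nonneg (‖v‖ ^ 2 - ⟪u, v⟫)]

theorem angle_le_arcsin_of_dist_le {u v : V} {d : ℝ} (h : dist u v ≤ d) (hd : d < ‖u‖) :
    angle u v ≤ arcsin (d / ‖u‖) := by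
  have hu : 0 < ‖u‖ := dist_nonneg.trans_lt (h.trans_lt hd)
  have hinner : 0 ≤ ⟪u, v⟫ := by
    have := mul_self_le_mul_self dist_nonneg (h.trans hd.le)
    rw [dist_eq_norm, ← sq, ← sq, norm_sub_sq_real] at this
    nlinarith [sq_nonneg ‖v‖]
  have hright : angle u v ≤ π / 2 := arccos_le_pi_div_two.2 (by positivity)
  rw [le_arcsin_iff_sin_le' ⟨by linarith [angle_nonneg u v, pi_pos], hright⟩, le_div_iff₀ hu]
  exact (sin_angle_mul_norm_le_dist u v).trans h

variable {P : Type*} [MetricSpace P] [NormedAddTorsor V P]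

theorem EuclideanGeometry.angle_le_angle_add_arcsin_add_arcsin {a₁ a a₂ b₁ b b₂ : P} {ε : ℝ}
    (h₁ : dist b₁ a₁ ≤ ε) (h : dist b a ≤ ε) (h₂ : dist b₂ a₂ ≤ ε)
    (hε₁ : 2 * ε < dist a₁ a) (hε₂ : 2 * ε < dist a₂ a) :
    ∠ b₁ b b₂ ≤ ∠ a₁ a a₂ + arcsin (2 * ε / dist a₁ a) + arcsin (2 * ε / dist a₂ a) := by
  have side {c d : P} (hc : dist d c ≤ ε) (hε : 2 * ε < dist c a) :
      InnerProductGeometry.angle (c -ᵥ a) (d -ᵥ b) ≤ arcsin (2 * ε / dist c a) := by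
    rw [dist_comm] at hc
    rw [dist_eq_norm_vsub V] at hε ⊢
    exact angle_le_arcsin_of_dist_le
      ((dist_vsub_vsub_le c a d b).trans (by linarith [dist_comm a b])) hε
  have hb₁ := side h₁ hε₁
  have hb₂ := side h₂ hε₂
  rw [InnerProductGeometry.angle_comm] at hb₁
  have := InnerProductGeometry.angle_le_angle_add_angle (b₁ -ᵥ b) (a₁ -ᵥ a) (b₂ -ᵥ b)
  have := InnerProductGeometry.angle_le_angle_add_angle (a₁ -ᵥ a) (a₂ -ᵥ a) (b₂ -ᵥ b)
  unfold EuclideanGeometry.angle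
  linarith

end Perturbation

noncomputable def circlePoint (θ : ℝ) : EuclideanSpace ℝ (Fin 2) := !₂[cos θ, sin θ]

theorem circlePoint_add_two_pi (θ : ℝ) : circlePoint (θ + 2 * π) = circlePoint θ := by
  simp [circlePoint]

theorem inner_circlePoint_sub_circlePoint (α β θ : ℝ) :
    ⟪circlePoint α - circlePoint θ, circlePoint β - circlePoint θ⟫ =
      1 - cos (α - θ) - cos (β - θ) + cos (α - β) := by
  simp only [circlePoint, PiLp.inner_apply, Fin.sum_univ_two, PiLp.sub_apply, RCLike.inner_apply,
    conj_trivial, Matrix.cons_val_zero, Matrix.cons_val_one, Matrix.cons_val_fin_one, cos_sub]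
  linear_combination sin_sq_add_cos_sq θ

theorem dist_circlePoint (α θ : ℝ) :
    dist (circlePoint α) (circlePoint θ) = 2 * |sin ((α - θ) / 2)| := by
  have hsq : dist (circlePoint α) (circlePoint θ) ^ 2 = (2 * sin ((α - θ) / 2)) ^ 2 := by
    rw [dist_eq_norm, ← real_inner_self_eq_norm_sq, inner_circlePoint_sub_circlePoint, sub_self,
      cos_zero, mul_pow, sin_sq_eq_half_sub, mul_div_cancel₀ _ two_ne_zero]
    ring
  rw [← sqrt_sq dist_nonneg, hsq, sqrt_sq_eq_abs, abs_mul, abs_two]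

theorem angle_circlePoint {φ : ℝ} (θ : ℝ) (h₀ : 0 < φ) (hπ : φ ≤ π) :
    ∠ (circlePoint (θ - φ)) (circlePoint θ) (circlePoint (θ + φ)) = π - φ := by
  have hs : 0 < sin (φ / 2) := sin_pos_of_pos_of_lt_pi (by positivity) (by linarith)
  have hside (ψ : ℝ) (hψ : ψ = φ ∨ ψ = -φ) :
      ‖circlePoint (θ + ψ) - circlePoint θ‖ = 2 * sin (φ / 2) := by
    rw [← dist_eq_norm, dist_circlePoint, add_sub_cancel_left]
    rcases hψ with rfl | rfl
    · rw [abs_of_pos hs]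
    · rw [neg_div, sin_neg, abs_neg, abs_of_pos hs]
  have hinner : ⟪circlePoint (θ - φ) - circlePoint θ, circlePoint (θ + φ) - circlePoint θ⟫ =
      -cos φ * (2 * sin (φ / 2)) ^ 2 := by
    rw [inner_circlePoint_sub_circlePoint, sub_sub_cancel_left, add_sub_cancel_left,
      show θ - φ - (θ + φ) = -(2 * φ) by ring, cos_neg, cos_neg, cos_two_mul, mul_pow,
      sin_sq_eq_half_sub, mul_div_cancel₀ _ two_ne_zero]
    ring
  rw [EuclideanGeometry.angle, InnerProductGeometry.angle, vsub_eq_sub, vsub_eq_sub, hinner,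
    sub_eq_add_neg θ, hside φ (.inl rfl), hside (-φ) (.inr rfl), ← sq,
    mul_div_cancel_right₀ _ (by positivity), arccos_neg, arccos_cos h₀.le hπ]

theorem angle_le_of_dist_circlePoint_le {θ ψ : ℝ} {p₁ p p₂ : EuclideanSpace ℝ (Fin 2)}
    (hψ₀ : 0 < ψ) (hψ : ψ ≤ π / 2)
    (h₁ : dist p₁ (circlePoint (θ - 2 * ψ)) ≤ 1 / 4 * sin ψ ^ 2)
    (h : dist p (circlePoint θ) ≤ 1 / 4 * sin ψ ^ 2)
    (h₂ : dist p₂ (circlePoint (θ + 2 * ψ)) ≤ 1 / 4 * sin ψ ^ 2) :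
    ∠ p₁ p p₂ ≤ π - 2 * ψ + 2 * arcsin (1 / 4 * sin ψ) := by
  have hsin : 0 < sin ψ := sin_pos_of_pos_of_lt_pi hψ₀ (by linarith [pi_pos])
  have hdist₁ : dist (circlePoint (θ - 2 * ψ)) (circlePoint θ) = 2 * sin ψ := by
    simp [dist_circlePoint, neg_div, abs_of_pos hsin]
  have hdist₂ : dist (circlePoint (θ + 2 * ψ)) (circlePoint θ) = 2 * sin ψ := by
    simp [dist_circlePoint, abs_of_pos hsin]
  have hε : 2 * (1 / 4 * sin ψ ^ 2) < 2 * sin ψ := by nlinarith [sin_le_one ψ]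
  have hratio : 2 * (1 / 4 * sin ψ ^ 2) / (2 * sin ψ) = 1 / 4 * sin ψ := by field_simp
  have hangle := EuclideanGeometry.angle_le_angle_add_arcsin_add_arcsin h₁ h h₂
    (hdist₁ ▸ hε) (hdist₂ ▸ hε)
  rwa [hdist₁, hdist₂, hratio, angle_circlePoint θ (by positivity) (by linarith),
    add_assoc, ← two_mul] at hangle

theorem stmt_1_general (n : ℕ) (hn : 5 ≤ n) (a b : ℕ → EuclideanSpace ℝ (Fin 2))
    (ha0 : ∀ i, a i 0 = Real.cos (2 * i * π / n))
    (ha1 : ∀ i, a i 1 = Real.sin (2 * i * π / n))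
    (hclose : ∀ i, dist (b i) (a i) ≤ (1 / 4) * Real.sin (π / n) ^ 2) :
    ((n : ℝ) - 2) * π / n + 2 * Real.arcsin ((1 / 4) * Real.sin (π / n)) < π ∧
    ∀ i, EuclideanGeometry.angle (b (i + n - 1)) (b i) (b (i + 1))
      ≤ ((n : ℝ) - 2) * π / n + 2 * Real.arcsin ((1 / 4) * Real.sin (π / n)) := by
  have hn₀ : (2 : ℝ) ≤ n := by exact_mod_cast (by omega : 2 ≤ n)
  have hψ₀ : 0 < π / n := by positivity
  have hψ : π / n ≤ π / 2 := div_le_div_of_nonneg_left pi_pos.le two_pos hn₀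
  have hinterior : ((n : ℝ) - 2) * π / n = π - 2 * (π / n) := by field_simp
  have hδ : arcsin (1 / 4 * sin (π / n)) < π / n :=
    (arcsin_lt_iff_lt_sin' ⟨by linarith [pi_pos], hψ⟩).2
      (by linarith [sin_pos_of_pos_of_lt_pi hψ₀ (by linarith [pi_pos])])
  refine ⟨by linarith, fun i => ?_⟩
  have ha (j : ℕ) : a j = circlePoint (2 * j * π / n) := by
    ext k; fin_cases k <;> simp [circlePoint, ha0, ha1]
  have hprev : a (i + n - 1) = circlePoint (2 * i * π / n - 2 * (π / n)) := by
    rw [ha, ← circlePoint_add_two_pi (2 * i * π / n - 2 * (π / n)), Nat.cast_sub (by omega)]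
    congr 1
    field_simp
    push_cast
    ring
  have hnext : a (i + 1) = circlePoint (2 * i * π / n + 2 * (π / n)) := by
    rw [ha]
    congr 1
    field_simp
    push_cast
    ring
  rw [hinterior]
  exact angle_le_of_dist_circlePoint_le hψ₀ hψ (hprev ▸ hclose (i + n - 1)) (ha i ▸ hclose i)
    (hnext ▸ hclose (i + 1))

/-- If each vertex of a perturbed `n`-gon is within `(1/4) sin² (π/n)` of the corresponding
vertex of the regular `n`-gon inscribed in the unit circle, then each interior angle of the
perturbed polygon is at most `(n-2)π/n + 2 arcsin((1/4) sin(π/n))`, which is `< π`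
(so the polygon is convex). -/
theorem stmt_1 (n : ℕ) (hn : 5 ≤ n) (a b : ℕ → EuclideanSpace ℝ (Fin 2))
    (ha0 : ∀ i, a i 0 = Real.cos (2 * i * π / n))
    (ha1 : ∀ i, a i 1 = Real.sin (2 * i * π / n))
    (hbper : ∀ i, b (i + n) = b i)
    (hclose : ∀ i, dist (b i) (a i) ≤ (1 / 4) * Real.sin (π / n) ^ 2) :
    ((n : ℝ) - 2) * π / n + 2 * Real.arcsin ((1 / 4) * Real.sin (π / n)) < π ∧
    ∀ i, EuclideanGeometry.angle (b (i + n - 1)) (b i) (b (i + 1))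
      ≤ ((n : ℝ) - 2) * π / n + 2 * Real.arcsin ((1 / 4) * Real.sin (π / n)) :=
  stmt_1_general n hn a b ha0 ha1 hclose
end

section
/- Let w be the torsion function of a bounded open convex set Ω ⊂ ℝ² (the solution of −Δw = 1 with Dirichlet boundary conditions). Then ‖∇w‖_∞ ≤ diam(Ω)/2. -/
/-!
Comparison with barriers through the maximum principle. At a boundary point `ζ`, a supporting
hyperplane puts the convex set `Ω` inside a strip of width `d = diam Ω`; the torsion function
`⟪e, y - ζ⟫ (d - ⟪e, y - ζ⟫) / 2` of that strip dominates `w`, so `w x ≤ d / 2 * ‖x - ζ‖`.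
For a translation vector `a`, the function `w (· - a) - w` is harmonic on `Ω ∩ (Ω + a)`, and at
each boundary point of that set one of the two terms is evaluated on `∂Ω`; the previous bound and
`w ≥ 0` then make `w` Lipschitz with constant `d / 2`, which bounds its gradient.
-/

open Filter Topology Laplacian InnerProductSpace
open scoped RealInnerProductSpace

section SecondDerivative

variable {E : Type*} [NormedAddCommGroup E] [NormedSpace ℝ E]

theorem ContDiffAt.iteratedFDeriv_two_apply_self {f : E → ℝ} {x : E} (hf : ContDiffAt ℝ 2 f x)
    (v : E) : iteratedFDeriv ℝ 2 f x ![v, v] = fderiv ℝ (fun y ↦ fderiv ℝ f y v) x v := by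
  have hdf : DifferentiableAt ℝ (fderiv ℝ f) x :=
    (hf.fderiv_right (m := 1) (by norm_num)).differentiableAt one_ne_zero
  rw [iteratedFDeriv_two_apply, fderiv_clm_apply hdf (differentiableAt_const v)]
  simp

theorem IsLocalMax.fderiv_fderiv_apply_self_nonpos {f : E → ℝ} {x : E} (hf : ContDiffAt ℝ 2 f x)
    (hmax : IsLocalMax f x) (v : E) : fderiv ℝ (fun y ↦ fderiv ℝ f y v) x v ≤ 0 := by
  set γ : ℝ → E := fun t ↦ x + t • v
  have hγ : ∀ t, HasDerivAt γ v t := fun t ↦ by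
    simpa only [id_eq, one_smul] using ((hasDerivAt_id t).smul_const v).const_add x
  have hγ0 : γ 0 = x := by simp [γ]
  have hγx : Tendsto γ (𝓝 0) (𝓝 x) := hγ0 ▸ (hγ 0).continuousAt.tendsto
  have hderiv : deriv (f ∘ γ) =ᶠ[𝓝 0] fun t ↦ fderiv ℝ f (γ t) v := by
    filter_upwards [hγx.eventually (hf.eventually (by simp))] with t ht
    exact ((ht.differentiableAt two_ne_zero).hasFDerivAt.comp_hasDerivAt t (hγ t)).deriv
  have hdd : deriv (deriv (f ∘ γ)) 0 = fderiv ℝ (fun y ↦ fderiv ℝ f y v) x v := by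
    have hψ : DifferentiableAt ℝ (fun y ↦ fderiv ℝ f y v) (γ 0) := by
      rw [hγ0]
      exact ((hf.fderiv_right (m := 1) (by norm_num)).differentiableAt one_ne_zero).clm_apply
        (differentiableAt_const v)
    have hchain := (hψ.hasFDerivAt.comp_hasDerivAt 0 (hγ 0)).deriv
    rw [hγ0] at hchain
    rw [hderiv.deriv_eq]
    exact hchain
  have hmax' : IsLocalMax (f ∘ γ) 0 := (hγ0 ▸ hmax).comp_continuous (hγ 0).continuousAt
  -- A positive second derivative would make `0` a local minimum as well, so `f ∘ γ` would be
  -- locally constant.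
  rw [← hdd]
  by_contra! hpos
  have hmin : IsLocalMin (f ∘ γ) 0 := isLocalMin_of_deriv_deriv_pos hpos hmax'.deriv_eq_zero
    ((hγ0 ▸ hf.continuousAt).comp (hγ 0).continuousAt)
  have hconst : f ∘ γ =ᶠ[𝓝 0] fun _ ↦ (f ∘ γ) 0 := by
    filter_upwards [hmin, hmax'] with t h₁ h₂ using le_antisymm h₂ h₁
  simp [hconst.deriv.deriv_eq] at hpos

end SecondDerivative

section Laplacian

variable {E : Type*} [NormedAddCommGroup E] [InnerProductSpace ℝ E]

theorem Convex.exists_norm_eq_one_inner_sub_nonneg [CompleteSpace E] {Ω : Set E} (hΩc : Convex ℝ Ω)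
    (hΩo : IsOpen Ω) (hΩne : Ω.Nonempty) {ζ : E} (hζ : ζ ∉ Ω) :
    ∃ e : E, ‖e‖ = 1 ∧ ∀ y ∈ closure Ω, 0 ≤ ⟪e, y - ζ⟫ := by
  obtain ⟨f, hf⟩ := geometric_hahn_banach_open_point hΩc hΩo hζ
  set b := (toDual ℝ E).symm f
  have hb : ∀ y, ⟪b, y⟫ = f y := fun y ↦ toDual_symm_apply
  have hb0 : b ≠ 0 := by
    rintro hb0
    obtain ⟨x, hx⟩ := hΩne
    simpa [← hb, hb0] using hf x hx
  refine ⟨-‖b‖⁻¹ • b, by simp [norm_smul, hb0], fun y hy ↦ ?_⟩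
  have hclosed : IsClosed {y | f y ≤ f ζ} := isClosed_le f.continuous continuous_const
  have hfy : f y ≤ f ζ := closure_minimal (fun y hy ↦ (hf y hy).le) hclosed hy
  rw [real_inner_smul_left, inner_sub_right, hb, hb]
  have : 0 < ‖b‖⁻¹ := by positivity
  nlinarith

/-- The torsion function of the strip `{y | 0 < ⟪e, y - ζ⟫ < d}` when `‖e‖ = 1`. -/
noncomputable def stripTorsion (e ζ : E) (d : ℝ) (y : E) : ℝ :=
  ⟪e, y - ζ⟫ * (d - ⟪e, y - ζ⟫) / 2

theorem contDiff_stripTorsion (e ζ : E) (d : ℝ) : ContDiff ℝ 2 (stripTorsion e ζ d) := by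
  have : ContDiff ℝ 2 (fun y ↦ ⟪e, y⟫) := (innerSL ℝ e).contDiff
  unfold stripTorsion
  fun_prop

variable [FiniteDimensional ℝ E]

theorem ContDiffAt.laplacian_eq_sum_fderiv_fderiv {ι : Type*} [Fintype ι] {f : E → ℝ} {x : E}
    (hf : ContDiffAt ℝ 2 f x) (b : OrthonormalBasis ι ℝ E) :
    Δ f x = ∑ i, fderiv ℝ (fun y ↦ fderiv ℝ f y (b i)) x (b i) := by
  simp [laplacian_eq_iteratedFDeriv_orthonormalBasis f b, hf.iteratedFDeriv_two_apply_self]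

theorem laplacian_comp_sub_right (f : E → ℝ) (a x : E) :
    Δ (fun y ↦ f (y - a)) x = Δ f (x - a) := by
  simp [laplacian_eq_iteratedFDeriv_stdOrthonormalBasis, iteratedFDeriv_comp_sub]

theorem laplacian_inner_quadratic (e : E) (a b : ℝ) (x : E) :
    Δ (fun y ↦ a * ⟪e, y⟫ ^ 2 + b * ⟪e, y⟫) x = 2 * a * ‖e‖ ^ 2 := by
  have hℓ : ∀ y, HasFDerivAt (fun y ↦ ⟪e, y⟫) (innerSL ℝ e) y := fun y ↦ (innerSL ℝ e).hasFDerivAt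
  have hq : ContDiff ℝ 2 (fun y ↦ a * ⟪e, y⟫ ^ 2 + b * ⟪e, y⟫) := by
    have : ContDiff ℝ 2 (fun y ↦ ⟪e, y⟫) := (innerSL ℝ e).contDiff
    fun_prop
  have hder : ∀ v, (fun y ↦ fderiv ℝ (fun y ↦ a * ⟪e, y⟫ ^ 2 + b * ⟪e, y⟫) y v)
      = fun y ↦ (2 * a * ⟪e, y⟫ + b) * ⟪e, v⟫ := by
    intro v; ext y
    rw [(((hℓ y).pow 2).const_mul a).fun_add ((hℓ y).const_mul b) |>.fderiv]
    simp
    ring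
  rw [hq.contDiffAt.laplacian_eq_sum_fderiv_fderiv (stdOrthonormalBasis ℝ E)]
  have hder2 : ∀ v, fderiv ℝ (fun y ↦ (2 * a * ⟪e, y⟫ + b) * ⟪e, v⟫) x v = 2 * a * ⟪e, v⟫ ^ 2 := by
    intro v
    rw [(((hℓ x).const_mul (2 * a)).add_const b).mul_const ⟪e, v⟫ |>.fderiv]
    simp
    ring
  simp only [hder, hder2, ← Finset.mul_sum, (stdOrthonormalBasis ℝ E).sum_sq_inner_left]

theorem laplacian_stripTorsion {e : E} (he : ‖e‖ = 1) (ζ : E) (d : ℝ) (x : E) :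
    Δ (stripTorsion e ζ d) x = -1 := by
  set q : E → ℝ := fun z ↦ -(1 / 2) * ⟪e, z⟫ ^ 2 + d / 2 * ⟪e, z⟫
  have : stripTorsion e ζ d = fun y ↦ q (y - ζ) := by
    ext y
    simp only [stripTorsion, q]
    ring
  rw [this, laplacian_comp_sub_right, laplacian_inner_quadratic, he]
  norm_num

theorem IsLocalMax.laplacian_nonpos {f : E → ℝ} {x : E} (hf : ContDiffAt ℝ 2 f x)
    (hmax : IsLocalMax f x) : Δ f x ≤ 0 := by
  rw [hf.laplacian_eq_sum_fderiv_fderiv (stdOrthonormalBasis ℝ E)]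
  exact Finset.sum_nonpos fun i _ ↦ hmax.fderiv_fderiv_apply_self_nonpos hf _

section MaximumPrinciple

variable {U : Set E} {f : E → ℝ} {M : ℝ}

theorem le_of_forall_mem_frontier_le_of_laplacian_pos (hU : IsOpen U)
    (hUb : Bornology.IsBounded U) (hf : ContDiffOn ℝ 2 f U) (hfc : ContinuousOn f (closure U))
    (hΔ : ∀ x ∈ U, 0 < Δ f x) (hM : ∀ z ∈ frontier U, f z ≤ M) {x : E} (hx : x ∈ U) :
    f x ≤ M := by
  obtain ⟨m, hm, hmax⟩ := hUb.isCompact_closure.exists_isMaxOn ⟨x, subset_closure hx⟩ hfc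
  have hmU : m ∉ U := fun hmU ↦
    (((hmax.isLocalMax (mem_of_superset (hU.mem_nhds hmU) subset_closure)).laplacian_nonpos
      (hf.contDiffAt (hU.mem_nhds hmU)))).not_gt (hΔ m hmU)
  exact (hmax (subset_closure hx)).trans (hM m (hU.frontier_eq ▸ ⟨hm, hmU⟩))

theorem le_of_forall_mem_frontier_le_of_laplacian_nonneg [Nontrivial E] (hU : IsOpen U)
    (hUb : Bornology.IsBounded U) (hf : ContDiffOn ℝ 2 f U) (hfc : ContinuousOn f (closure U))
    (hΔ : ∀ x ∈ U, 0 ≤ Δ f x) (hM : ∀ z ∈ frontier U, f z ≤ M) {x : E} (hx : x ∈ U) :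
    f x ≤ M := by
  obtain ⟨e, he⟩ := exists_norm_eq E zero_le_one
  obtain ⟨r, hr⟩ := hUb.closure.subset_closedBall 0
  have hq : ∀ y ∈ closure U, ⟪e, y⟫ ^ 2 ≤ r ^ 2 + 1 := by
    intro y hy
    have h₁ : |⟪e, y⟫| ≤ r := by
      refine (abs_real_inner_le_norm e y).trans ?_
      simpa [he] using hr hy
    nlinarith [sq_abs ⟪e, y⟫, abs_nonneg ⟪e, y⟫]
  refine le_of_forall_pos_le_add fun δ hδ ↦ ?_
  set ε := δ / (r ^ 2 + 1)
  have hε : 0 < ε := by positivity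
  set g : E → ℝ := fun y ↦ ε * ⟪e, y⟫ ^ 2 + 0 * ⟪e, y⟫
  have hg : ContDiff ℝ 2 g := by
    have : ContDiff ℝ 2 (fun y ↦ ⟪e, y⟫) := (innerSL ℝ e).contDiff
    fun_prop
  have hgx : 0 ≤ g x := by simp only [g, zero_mul, add_zero]; positivity
  have hperturbed : (f + g) x ≤ M + δ := by
    refine le_of_forall_mem_frontier_le_of_laplacian_pos hU hUb (hf.add hg.contDiffOn)
      (hfc.add hg.continuous.continuousOn) (fun y hy ↦ ?_) (fun z hz ↦ ?_) hx
    · change 0 < Δ (f + g) y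
      rw [(hf.contDiffAt (hU.mem_nhds hy)).laplacian_add hg.contDiffAt,
        laplacian_inner_quadratic, he]
      linarith [hΔ y hy]
    · have : ε * ⟪e, z⟫ ^ 2 ≤ δ := by
        calc ε * ⟪e, z⟫ ^ 2 ≤ ε * (r ^ 2 + 1) := by gcongr; exact hq z (frontier_subset_closure hz)
          _ = δ := div_mul_cancel₀ _ (by positivity)
      simp only [g]
      linarith [hM z hz]
  simp only [Pi.add_apply] at hperturbed
  linarith

end MaximumPrinciple

structure IsTorsionFunction (Ω : Set E) (w : E → ℝ) : Prop where
  contDiffOn : ContDiffOn ℝ 2 w Ω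
  continuousOn : ContinuousOn w (closure Ω)
  eq_zero_of_mem_frontier : ∀ x ∈ frontier Ω, w x = 0
  laplacian_eq : ∀ x ∈ Ω, Δ w x = -1

namespace IsTorsionFunction

variable {Ω : Set E} {w : E → ℝ}

theorem nonneg (hw : IsTorsionFunction Ω w) (hΩo : IsOpen Ω) (hΩb : Bornology.IsBounded Ω)
    {x : E} (hx : x ∈ closure Ω) : 0 ≤ w x := by
  by_cases hxΩ : x ∈ Ω
  · have hΔ : ∀ y ∈ Ω, 0 < Δ (-w) y := fun y hy ↦ by simp [laplacian_neg, hw.laplacian_eq y hy]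
    have := le_of_forall_mem_frontier_le_of_laplacian_pos (M := 0) hΩo hΩb hw.contDiffOn.neg
      hw.continuousOn.neg hΔ (fun z hz ↦ by simp [hw.eq_zero_of_mem_frontier z hz]) hxΩ
    simpa using this
  · exact (hw.eq_zero_of_mem_frontier x (hΩo.frontier_eq ▸ ⟨hx, hxΩ⟩)).ge

variable [Nontrivial E]

theorem le_stripTorsion (hw : IsTorsionFunction Ω w) (hΩo : IsOpen Ω)
    (hΩb : Bornology.IsBounded Ω) {e ζ : E} {d : ℝ} (he : ‖e‖ = 1)
    (hstrip : ∀ y ∈ closure Ω, 0 ≤ ⟪e, y - ζ⟫ ∧ ⟪e, y - ζ⟫ ≤ d) {x : E} (hx : x ∈ Ω) :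
    w x ≤ stripTorsion e ζ d x := by
  have hψ := contDiff_stripTorsion e ζ d
  have := le_of_forall_mem_frontier_le_of_laplacian_nonneg (f := w - stripTorsion e ζ d) (M := 0)
    hΩo hΩb (hw.contDiffOn.sub hψ.contDiffOn) (hw.continuousOn.sub hψ.continuous.continuousOn)
    (fun y hy ↦ ?_) (fun z hz ↦ ?_) hx
  · simpa [sub_nonpos] using this
  · rw [(hw.contDiffOn.contDiffAt (hΩo.mem_nhds hy)).laplacian_sub hψ.contDiffAt,
      laplacian_stripTorsion he, hw.laplacian_eq y hy, sub_self]
  · obtain ⟨h₀, h₁⟩ := hstrip z (frontier_subset_closure hz)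
    simp only [Pi.sub_apply, hw.eq_zero_of_mem_frontier z hz, stripTorsion]
    nlinarith

theorem le_mul_norm_sub_of_mem_frontier (hw : IsTorsionFunction Ω w) (hΩo : IsOpen Ω)
    (hΩb : Bornology.IsBounded Ω) (hΩc : Convex ℝ Ω) {x ζ : E} (hx : x ∈ closure Ω)
    (hζ : ζ ∈ frontier Ω) : w x ≤ Metric.diam Ω / 2 * ‖x - ζ‖ := by
  have hd : 0 ≤ Metric.diam Ω := Metric.diam_nonneg
  by_cases hxΩ : x ∈ Ω
  swap
  · rw [hw.eq_zero_of_mem_frontier x (hΩo.frontier_eq ▸ ⟨hx, hxΩ⟩)]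
    positivity
  obtain ⟨e, he, hL⟩ :=
    hΩc.exists_norm_eq_one_inner_sub_nonneg hΩo ⟨x, hxΩ⟩ (hΩo.frontier_eq ▸ hζ).2
  have hLe : ∀ y, ⟪e, y - ζ⟫ ≤ ‖y - ζ‖ := fun y ↦ by
    simpa [he] using real_inner_le_norm e (y - ζ)
  have hstrip : ∀ y ∈ closure Ω, 0 ≤ ⟪e, y - ζ⟫ ∧ ⟪e, y - ζ⟫ ≤ Metric.diam Ω := fun y hy ↦
    ⟨hL y hy, calc
      ⟪e, y - ζ⟫ ≤ dist y ζ := dist_eq_norm y ζ ▸ hLe y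
      _ ≤ Metric.diam (closure Ω) :=
        Metric.dist_le_diam_of_mem hΩb.closure hy (frontier_subset_closure hζ)
      _ = Metric.diam Ω := Metric.diam_closure Ω⟩
  have hwx := hw.le_stripTorsion hΩo hΩb he hstrip hxΩ
  simp only [stripTorsion] at hwx
  nlinarith [hL x hx, hLe x]

theorem sub_le_mul_norm_sub (hw : IsTorsionFunction Ω w) (hΩo : IsOpen Ω)
    (hΩb : Bornology.IsBounded Ω) (hΩc : Convex ℝ Ω) {x y : E} (hx : x ∈ Ω) (hy : y ∈ Ω) :
    w x - w y ≤ Metric.diam Ω / 2 * ‖x - y‖ := by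
  set a := y - x
  set O := Ω ∩ (fun p ↦ p - a) ⁻¹' Ω
  have hshift : Continuous fun p : E ↦ p - a := by fun_prop
  have hOo : IsOpen O := hΩo.inter (hΩo.preimage hshift)
  have hclO : closure O ⊆ closure Ω ∩ (fun p ↦ p - a) ⁻¹' closure Ω :=
    closure_minimal (Set.inter_subset_inter subset_closure (Set.preimage_mono subset_closure))
      (isClosed_closure.inter (isClosed_closure.preimage hshift))
  set v : E → ℝ := (fun p ↦ w (p - a)) - w
  have hv : ContDiffOn ℝ 2 v O :=
    (hw.contDiffOn.comp (by fun_prop) fun p hp ↦ hp.2).sub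
      (hw.contDiffOn.mono Set.inter_subset_left)
  have hvc : ContinuousOn v (closure O) :=
    (hw.continuousOn.comp hshift.continuousOn fun p hp ↦ (hclO hp).2).sub
      (hw.continuousOn.mono fun p hp ↦ (hclO hp).1)
  have hΔ : ∀ p ∈ O, 0 ≤ Δ v p := by
    intro p hp
    have hwp := hw.contDiffOn.contDiffAt (hΩo.mem_nhds hp.1)
    have hwpa : ContDiffAt ℝ 2 (fun q ↦ w (q - a)) p :=
      (hw.contDiffOn.contDiffAt (hΩo.mem_nhds hp.2)).comp p (by fun_prop)
    rw [hwpa.laplacian_sub hwp, laplacian_comp_sub_right, hw.laplacian_eq _ hp.2,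
      hw.laplacian_eq _ hp.1, sub_self]
  have hM : ∀ z ∈ frontier O, v z ≤ Metric.diam Ω / 2 * ‖a‖ := by
    intro z hz
    obtain ⟨hz₁, hz₂⟩ := hclO (frontier_subset_closure hz)
    have hzO : z ∉ O := (hOo.frontier_eq ▸ hz).2
    simp only [v, Pi.sub_apply]
    by_cases hzΩ : z ∈ Ω
    · have hza : z - a ∈ frontier Ω := hΩo.frontier_eq ▸ ⟨hz₂, fun h ↦ hzO ⟨hzΩ, h⟩⟩
      rw [hw.eq_zero_of_mem_frontier _ hza]
      have : 0 ≤ Metric.diam Ω / 2 * ‖a‖ := by have := Metric.diam_nonneg (s := Ω); positivity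
      linarith [hw.nonneg hΩo hΩb hz₁]
    · have hzf : z ∈ frontier Ω := hΩo.frontier_eq ▸ ⟨hz₁, hzΩ⟩
      rw [hw.eq_zero_of_mem_frontier _ hzf, sub_zero]
      simpa using hw.le_mul_norm_sub_of_mem_frontier hΩo hΩb hΩc hz₂ hzf
  have hyO : y ∈ O := ⟨hy, by simpa [a] using hx⟩
  simpa [v, a, norm_sub_rev] using
    le_of_forall_mem_frontier_le_of_laplacian_nonneg hOo (hΩb.subset Set.inter_subset_left) hv hvc
      hΔ hM hyO

theorem norm_fderiv_le (hw : IsTorsionFunction Ω w) (hΩo : IsOpen Ω)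
    (hΩb : Bornology.IsBounded Ω) (hΩc : Convex ℝ Ω) {x : E} (hx : x ∈ Ω) :
    ‖fderiv ℝ w x‖ ≤ Metric.diam Ω / 2 := by
  refine norm_fderiv_le_of_lip' ℝ (by have := Metric.diam_nonneg (s := Ω); positivity) ?_
  filter_upwards [hΩo.mem_nhds hx] with y hy
  rw [Real.norm_eq_abs, abs_le]
  constructor
  · have := hw.sub_le_mul_norm_sub hΩo hΩb hΩc hx hy
    rw [norm_sub_rev] at this
    linarith
  · exact hw.sub_le_mul_norm_sub hΩo hΩb hΩc hy hx

end IsTorsionFunction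

end Laplacian

/-- The torsion function `w` of a bounded open convex set `Ω ⊂ ℝ²` (solution of `-Δw = 1`
with Dirichlet boundary conditions) satisfies `‖∇w‖_∞ ≤ diam Ω / 2`. -/
theorem stmt_8 (Ω : Set (EuclideanSpace ℝ (Fin 2)))
    (hΩo : IsOpen Ω) (hΩb : Bornology.IsBounded Ω) (hΩc : Convex ℝ Ω)
    (w : EuclideanSpace ℝ (Fin 2) → ℝ)
    (hw2 : ContDiffOn ℝ 2 w Ω)
    (hwc : ContinuousOn w (closure Ω))
    (hw0 : ∀ x ∈ frontier Ω, w x = 0)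
    (hpde : ∀ x ∈ Ω,
      fderiv ℝ (fun y => fderiv ℝ w y (EuclideanSpace.single 0 1)) x (EuclideanSpace.single 0 1)
        + fderiv ℝ (fun y => fderiv ℝ w y (EuclideanSpace.single 1 1)) x
            (EuclideanSpace.single 1 1) = -1) :
    ∀ x ∈ Ω, ‖gradient w x‖ ≤ Metric.diam Ω / 2 := by
  have hw : IsTorsionFunction Ω w := by
    refine ⟨hw2, hwc, hw0, fun x hx ↦ ?_⟩
    rw [(hw2.contDiffAt (hΩo.mem_nhds hx)).laplacian_eq_sum_fderiv_fderiv
      (EuclideanSpace.basisFun (Fin 2) ℝ), Fin.sum_univ_two]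
    simpa using hpde x hx
  intro x hx
  rw [gradient, LinearIsometryEquiv.norm_map]
  exact hw.norm_fderiv_le hΩo hΩb hΩc hx
end

section
/- Let M be a real symmetric 2n × 2n matrix with exactly four zero eigenvalues whose kernel is spanned by four vectors v₁, v₂, v₃, v₄, and suppose the remaining 2n − 4 eigenvalues of M are strictly positive. If the projections of v₁, v₂, v₃, v₄ onto the last 4 coordinates are linearly independent in ℝ⁴, then the (2n−4) × (2n−4) principal submatrix of M obtained by deleting the last four rows and columns is positive definite. -/
/-!
Extend a vector `x` on the first `2n - 4` coordinates by zero to `y`. Then `yᵀ M y = xᵀ M' x`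
for the principal submatrix `M'`, so it suffices that `y ∈ ker M` forces `x = 0`. Such a `y`
lies in the span of the `v i` and vanishes on the last four coordinates; since the
truncations of the `v i` are independent, the span of the `v i` meets the kernel of the
truncation trivially, hence `y = 0`.
-/

open Matrix Function
open scoped ComplexOrder

section ExtendByZero

variable {R m n : Type*} [Fintype m] [Fintype n] {f : m → n}

theorem Matrix.mulVec_extend_zero [NonUnitalNonAssocSemiring R] (hf : Injective f)
    (A : Matrix n n R) (y : m → R) : A *ᵥ extend f y 0 = A.submatrix id f *ᵥ y := by
  ext a
  refine (Fintype.sum_of_injective f hf _ _ (fun b hb => ?_) fun i => ?_).symm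
  · simp [extend_apply' _ _ _ (fun ⟨i, hi⟩ => hb ⟨i, hi⟩)]
  · simp [hf.extend_apply]

theorem Matrix.star_extend_zero_dotProduct [NonUnitalNonAssocSemiring R] [StarRing R]
    (hf : Injective f) (x : m → R) (w : n → R) :
    star (extend f x 0) ⬝ᵥ w = star x ⬝ᵥ (w ∘ f) := by
  refine (Fintype.sum_of_injective f hf _ _ (fun b hb => ?_) fun i => ?_).symm
  · simp [extend_apply' _ _ _ (fun ⟨i, hi⟩ => hb ⟨i, hi⟩)]
  · simp [hf.extend_apply]

theorem Matrix.star_extend_zero_dotProduct_mulVec_extend_zero [NonUnitalNonAssocSemiring R]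
    [StarRing R] (hf : Injective f) (A : Matrix n n R) (x y : m → R) :
    star (extend f x 0) ⬝ᵥ (A *ᵥ extend f y 0) = star x ⬝ᵥ (A.submatrix f f *ᵥ y) := by
  rw [mulVec_extend_zero hf, star_extend_zero_dotProduct hf]
  rfl

theorem Matrix.PosSemidef.posDef_submatrix_of_mulVec_extend_zero {𝕜 : Type*} [RCLike 𝕜]
    {A : Matrix n n 𝕜} (hA : A.PosSemidef) (hf : Injective f)
    (hker : ∀ x : m → 𝕜, A *ᵥ extend f x 0 = 0 → x = 0) : (A.submatrix f f).PosDef := by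
  refine PosDef.of_dotProduct_mulVec_pos (hA.1.submatrix f) fun x hx => ?_
  rw [← star_extend_zero_dotProduct_mulVec_extend_zero hf]
  refine (hA.dotProduct_mulVec_nonneg _).lt_of_ne fun hzero => hx (hker x ?_)
  exact (hA.dotProduct_mulVec_zero_iff _).mp hzero.symm

end ExtendByZero

/-- Let `M` be a real symmetric `2n × 2n` positive semidefinite matrix whose kernel is
spanned by four linearly independent vectors `v 0, ..., v 3` (so `M` has exactly four zero
eigenvalues and `2n - 4` strictly positive ones). If the projections of the `v i` onto the
last four coordinates are linearly independent in `ℝ⁴`, then the `(2n-4) × (2n-4)` principal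
submatrix of `M` obtained by deleting the last four rows and columns is positive definite. -/
theorem stmt_15 (n : ℕ) (hn : 3 ≤ n)
    (M : Matrix (Fin (2 * n)) (Fin (2 * n)) ℝ)
    (hpsd : M.PosSemidef)
    (v : Fin 4 → (Fin (2 * n) → ℝ))
    (hker : LinearMap.ker (Matrix.toLin' M) = Submodule.span ℝ (Set.range v))
    (hproj : LinearIndependent ℝ
      (fun i : Fin 4 => fun j : Fin 4 =>
        v i ⟨2 * n - 4 + j.val, by have := j.isLt; omega⟩)) :
    (M.submatrix
      (fun i : Fin (2 * n - 4) => (⟨i.val, by have := i.isLt; omega⟩ : Fin (2 * n)))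
      (fun i : Fin (2 * n - 4) => (⟨i.val, by have := i.isLt; omega⟩ : Fin (2 * n)))).PosDef := by
  set head : Fin (2 * n - 4) → Fin (2 * n) := fun i => ⟨i.val, by omega⟩
  set tail : Fin 4 → Fin (2 * n) := fun j => ⟨2 * n - 4 + j.val, by omega⟩
  have hhead : Injective head := fun i j h => Fin.ext (Fin.mk.inj h)
  have hdisj := Submodule.range_ker_disjoint (f := LinearMap.funLeft ℝ ℝ tail) hproj
  refine hpsd.posDef_submatrix_of_mulVec_extend_zero hhead fun x hx => ?_
  have hy_ker : extend head x 0 ∈ LinearMap.ker (toLin' M) := by simpa using hx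
  have hy_tail : extend head x 0 ∈ LinearMap.ker (LinearMap.funLeft ℝ ℝ tail) := by
    ext j
    refine extend_apply' _ _ _ fun ⟨i, hi⟩ => ?_
    have := congrArg Fin.val hi
    simp only [head, tail] at this
    omega
  have hy : extend head x 0 = 0 := Submodule.disjoint_def.mp hdisj _ (hker ▸ hy_ker) hy_tail
  funext i
  simpa [hhead.extend_apply] using congrFun hy (head i)
end
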